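/- Let (Ω, F, P) be a probability space and m ⊆ F a sub-σ-algebra. Let X, e, τ, τ̂ be real-valued random variables satisfying τ̂ − τ = −X + e almost surely, and let M_{1L}, M_{1U}, M_{2L}, M_{2U} be real-valued F-measurable random variables. Fix α₁, α₂, π₁, π₂ ∈ (0,1). Suppose P({ω : P[M_{1L} ≤ X ≤ M_{1U} | m](ω) ≥ 1 − α₁}) ≥ 1 − π₁ and P({ω : P[M_{2L} ≤ e ≤ M_{2U} | m](ω) ≥ 1 − α₂}) ≥ 1 − π₂. Then P({ω : P[τ̂ + M_{1L} − M_{2U} ≤ τ ≤ τ̂ + M_{1U} − M_{2L} | m](ω) ≥ 1 − α₁ − α₂}) ≥ 1 − π₁ − π₂. -/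

import Mathlib

open MeasureTheory
open scoped ENNReal

/-- Composition of in-sample and out-of-sample conditional coverage bounds into an
`(α₁+α₂, π₁+π₂)`-valid conditional prediction interval for the causal predictand `τ`. -/
theorem stmt_0 {Ω : Type*} (m : MeasurableSpace Ω) {mΩ : MeasurableSpace Ω} (μ : Measure Ω) [IsProbabilityMeasure μ]
    (hm : m ≤ mΩ)
    (X e τ τhat M1L M1U M2L M2U : Ω → ℝ)
    (hX : Measurable X) (he : Measurable e) (hτ : Measurable τ) (hτhat : Measurable τhat)
    (hM1L : Measurable M1L) (hM1U : Measurable M1U)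
    (hM2L : Measurable M2L) (hM2U : Measurable M2U)
    (α₁ α₂ π₁ π₂ : ℝ)
    (hα₁ : α₁ ∈ Set.Ioo (0 : ℝ) 1) (hα₂ : α₂ ∈ Set.Ioo (0 : ℝ) 1)
    (hπ₁ : π₁ ∈ Set.Ioo (0 : ℝ) 1) (hπ₂ : π₂ ∈ Set.Ioo (0 : ℝ) 1)
    (hdecomp : ∀ᵐ ω ∂μ, τhat ω - τ ω = -X ω + e ω)
    (h1 : ENNReal.ofReal (1 - π₁) ≤
      μ {ω | 1 - α₁ ≤
        (μ[Set.indicator {ω' | M1L ω' ≤ X ω' ∧ X ω' ≤ M1U ω'} (fun _ => (1 : ℝ)) | m]) ω})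
    (h2 : ENNReal.ofReal (1 - π₂) ≤
      μ {ω | 1 - α₂ ≤
        (μ[Set.indicator {ω' | M2L ω' ≤ e ω' ∧ e ω' ≤ M2U ω'} (fun _ => (1 : ℝ)) | m]) ω}) :
    ENNReal.ofReal (1 - π₁ - π₂) ≤
      μ {ω | 1 - α₁ - α₂ ≤
        (μ[Set.indicator
            {ω' | τhat ω' + M1L ω' - M2U ω' ≤ τ ω' ∧ τ ω' ≤ τhat ω' + M1U ω' - M2L ω'}
            (fun _ => (1 : ℝ)) | m]) ω} := by
  letI : MeasurableSpace Ω := mΩ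
  set A : Set Ω := {ω' | M1L ω' ≤ X ω' ∧ X ω' ≤ M1U ω'} with hAdef
  set B : Set Ω := {ω' | M2L ω' ≤ e ω' ∧ e ω' ≤ M2U ω'} with hBdef
  set C : Set Ω := {ω' | τhat ω' + M1L ω' - M2U ω' ≤ τ ω' ∧ τ ω' ≤ τhat ω' + M1U ω' - M2L ω'}
    with hCdef
  have le_meas : ∀ (u v : Ω → ℝ), Measurable[mΩ] u → Measurable[mΩ] v →
      MeasurableSet[mΩ] {a | u a ≤ v a} := fun u v hu hv =>
    (hu.prodMk hv) measurableSet_le'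
  have hA : MeasurableSet[mΩ] A := ((le_meas _ _ hM1L hX).inter (le_meas _ _ hX hM1U))
  have hB : MeasurableSet[mΩ] B := ((le_meas _ _ hM2L he).inter (le_meas _ _ he hM2U))
  have hC : MeasurableSet[mΩ] C :=
    ((le_meas _ _ ((hτhat.add hM1L).sub hM2U) hτ).inter
      (le_meas _ _ hτ ((hτhat.add hM1U).sub hM2L)))
  set f := A.indicator (fun _ => (1 : ℝ)) with hfdef
  set g := B.indicator (fun _ => (1 : ℝ)) with hgdef
  set h := C.indicator (fun _ => (1 : ℝ)) with hhdef
  have hfi : Integrable f μ := (integrable_const (1:ℝ)).indicator hA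
  have hgi : Integrable g μ := (integrable_const (1:ℝ)).indicator hB
  have hhi : Integrable h μ := (integrable_const (1:ℝ)).indicator hC
  -- pointwise: f + g - 1 ≤ h a.e.
  have hpt : (f + g - fun _ => (1:ℝ)) ≤ᵐ[μ] h := by
    filter_upwards [hdecomp] with ω hω
    have hτeq : τ ω = τhat ω + X ω - e ω := by linarith
    simp only [Pi.sub_apply, Pi.add_apply]
    by_cases hA' : ω ∈ A
    · by_cases hB' : ω ∈ B
      · have hC' : ω ∈ C := by
          obtain ⟨h1a, h1b⟩ := hA'
          obtain ⟨h2a, h2b⟩ := hB'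
          constructor <;> simp only [hCdef, Set.mem_setOf_eq] at * <;> linarith
        simp [hfdef, hgdef, hhdef, Set.indicator_of_mem, hA', hB', hC']
      · have : C.indicator (fun _ => (1:ℝ)) ω ≥ 0 := by
          by_cases hC' : ω ∈ C <;> simp [Set.indicator_apply, hC']
        simp only [hfdef, hgdef, hhdef, Set.indicator_of_mem hA',
          Set.indicator_of_notMem hB'] at *
        linarith
    · have h0 : C.indicator (fun _ => (1:ℝ)) ω ≥ 0 := by
        by_cases hC' : ω ∈ C <;> simp [Set.indicator_apply, hC']
      have h1' : B.indicator (fun _ => (1:ℝ)) ω ≤ 1 := by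
        by_cases hB' : ω ∈ B <;> simp [Set.indicator_apply, hB']
      simp only [hfdef, hgdef, hhdef, Set.indicator_of_notMem hA'] at *
      linarith
  -- condexp inequality
  have hkey : ∀ᵐ ω ∂μ, (μ[f|m]) ω + (μ[g|m]) ω - 1 ≤ (μ[h|m]) ω := by
    have hmono := condExp_mono (μ := μ) (m := m) ((hfi.add hgi).sub (integrable_const 1)) hhi hpt
    have hsub := condExp_sub (μ := μ) (m := m) (hfi.add hgi) (integrable_const (1:ℝ))
    have hadd := condExp_add (μ := μ) (m := m) hfi hgi
    have hconst : μ[(fun _ => (1:ℝ))|m] = fun _ => (1:ℝ) := condExp_const hm 1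
    filter_upwards [hmono, hsub, hadd] with ω h1' h2' h3'
    simp only [Pi.sub_apply, Pi.add_apply, hconst] at h1' h2' h3' ⊢
    linarith
  -- event level
  set S₁ := {ω | 1 - α₁ ≤ (μ[f|m]) ω} with hS1def
  set S₂ := {ω | 1 - α₂ ≤ (μ[g|m]) ω} with hS2def
  set T := {ω | 1 - α₁ - α₂ ≤ (μ[h|m]) ω} with hTdef
  have hTc : μ Tᶜ ≤ ENNReal.ofReal π₁ + ENNReal.ofReal π₂ := by
    have hsub : Tᶜ ≤ᵐ[μ] (S₁ᶜ ∪ S₂ᶜ : Set Ω) := by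
      filter_upwards [hkey] with ω hω
      intro hT
      by_cases hs1 : ω ∈ S₁
      · by_cases hs2 : ω ∈ S₂
        · exfalso
          simp only [hS1def, Set.mem_setOf_eq] at hs1
          simp only [hS2def, Set.mem_setOf_eq] at hs2
          have hmem : ω ∈ T := by
            simp only [hTdef, Set.mem_setOf_eq]
            linarith
          exact hT hmem
        · exact Or.inr hs2
      · exact Or.inl hs1
    have hcm : Measurable[mΩ] (μ[f|m]) :=
      (stronglyMeasurable_condExp (μ := μ) (f := f)).measurable.mono hm le_rfl
    have hcm2 : Measurable[mΩ] (μ[g|m]) :=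
      (stronglyMeasurable_condExp (μ := μ) (f := g)).measurable.mono hm le_rfl
    have hS1m : MeasurableSet[mΩ] S₁ := measurableSet_le measurable_const hcm
    have hS2m : MeasurableSet[mΩ] S₂ := measurableSet_le measurable_const hcm2
    have c1 : μ S₁ᶜ ≤ ENNReal.ofReal π₁ := by
      have hco : μ S₁ᶜ = 1 - μ S₁ := by
        rw [measure_compl hS1m (measure_ne_top μ S₁), measure_univ]
      rw [hco]
      calc (1:ℝ≥0∞) - μ S₁ ≤ 1 - ENNReal.ofReal (1 - π₁) := tsub_le_tsub_left h1 1
        _ = ENNReal.ofReal π₁ := by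
            rw [← ENNReal.ofReal_one, ← ENNReal.ofReal_sub _ (by linarith [hπ₁.2])]
            norm_num
    have c2 : μ S₂ᶜ ≤ ENNReal.ofReal π₂ := by
      have hco : μ S₂ᶜ = 1 - μ S₂ := by
        rw [measure_compl hS2m (measure_ne_top μ S₂), measure_univ]
      rw [hco]
      calc (1:ℝ≥0∞) - μ S₂ ≤ 1 - ENNReal.ofReal (1 - π₂) := tsub_le_tsub_left h2 1
        _ = ENNReal.ofReal π₂ := by
            rw [← ENNReal.ofReal_one, ← ENNReal.ofReal_sub _ (by linarith [hπ₂.2])]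
            norm_num
    calc μ Tᶜ ≤ μ (S₁ᶜ ∪ S₂ᶜ) := measure_mono_ae hsub
      _ ≤ μ S₁ᶜ + μ S₂ᶜ := measure_union_le _ _
      _ ≤ ENNReal.ofReal π₁ + ENNReal.ofReal π₂ := add_le_add c1 c2
  have hone : (1:ℝ≥0∞) ≤ μ T + μ Tᶜ := by
    calc (1:ℝ≥0∞) = μ (T ∪ Tᶜ) := by simp
      _ ≤ μ T + μ Tᶜ := measure_union_le _ _
  calc ENNReal.ofReal (1 - π₁ - π₂)
      = ENNReal.ofReal 1 - ENNReal.ofReal (π₁ + π₂) := by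
        rw [← ENNReal.ofReal_sub _ (by linarith [hπ₁.1, hπ₂.1])]; ring_nf
    _ ≤ 1 - μ Tᶜ := by
        rw [ENNReal.ofReal_one]
        exact tsub_le_tsub_left
          (hTc.trans_eq (ENNReal.ofReal_add (le_of_lt hπ₁.1) (le_of_lt hπ₂.1)).symm) 1
    _ ≤ μ T := tsub_le_iff_right.mpr hone
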